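/- (Asymptotic consistency, Eq. (7).) In the setting of Theorem 3.1, suppose the deterministic sequences satisfy P{ d_W(P*, P̂_N) > r_N } ≤ β_N for every N, ∑_{N=1}^∞ β_N < ∞, and r_N → 0 as N → ∞, and that k̂_N ≤ L almost surely for every N. Then almost surely, for every δ > 0 there exists N₀ such that for all N ≥ N₀: τ_ε/(1+ε) − δ ≤ E_{P*}[h(x̂_N,ξ)] ≤ τ_ε + δ, where τ_ε = (1+ε)·inf_{x∈𝒳} E_{P̂_N}[h(x,ξ)] is the (random, N-dependent) reference value. -/

import Mathlib

open MeasureTheory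

noncomputable section

abbrev Vec (m : ℕ) := EuclideanSpace ℝ (Fin m)

/-- A coupling of two Borel probability measures on `Vec m`. -/
def IsCoupling {m : ℕ} (γ : Measure (Vec m × Vec m)) (P Q : Measure (Vec m)) : Prop :=
  IsProbabilityMeasure γ ∧ γ.map Prod.fst = P ∧ γ.map Prod.snd = Q

/-- Type-1 Wasserstein distance: infimum of `∫ ‖ξ₁ - ξ₂‖₂ dγ` over couplings `γ`. -/
noncomputable def wDist {m : ℕ} (P Q : Measure (Vec m)) : ℝ :=
  sInf {c : ℝ | ∃ γ : Measure (Vec m × Vec m), IsCoupling γ P Q ∧ c = ∫ p, ‖p.1 - p.2‖ ∂γ}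

/-- `(x, k)` is RS-feasible for reference value `τ` with respect to `Phat`. -/
def RSFeasible {m : ℕ} {X : Type*} (h : X → Vec m → ℝ)
    (Phat : Measure (Vec m)) (τ : ℝ) (x : X) (k : ℝ) : Prop :=
  0 ≤ k ∧ ∀ P : Measure (Vec m), IsProbabilityMeasure P →
    Integrable (fun ξ => ‖ξ‖) P → (∫ ξ, h x ξ ∂P) - τ ≤ k * wDist P Phat

/-- Empirical measure `(1/N) ∑ δ_{x i}`. -/
noncomputable def empMeas {m N : ℕ} (xs : Fin N → Vec m) : Measure (Vec m) :=
  (N : ENNReal)⁻¹ • ∑ i : Fin N, Measure.dirac (xs i)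

/-!
By Borel–Cantelli, summable tail bounds at radii `r N → 0` force `d_W(P*, P̂_N) → 0` almost surely.
Along such a sample path, RS-feasibility tested at `P = P*` and `k̂_N ≤ L` give
`E_{P*}[h(x̂_N, ·)] ≤ τ_ε + L d_W(P*, P̂_N)`, while the easy half of Kantorovich–Rubinstein duality
and `τ_ε / (1 + ε) = inf_x E_{P̂_N}[h(x, ·)] ≤ E_{P̂_N}[h(x̂_N, ·)]` give
`τ_ε / (1 + ε) ≤ E_{P*}[h(x̂_N, ·)] + L d_W(P*, P̂_N)`.
-/

open Filter Topology

lemma isProbabilityMeasure_empMeas {m N : ℕ} (hN : N ≠ 0) (xs : Fin N → Vec m) :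
    IsProbabilityMeasure (empMeas xs) :=
  ⟨by simp [empMeas, Measure.smul_apply, ENNReal.inv_mul_cancel, hN]⟩

lemma integrable_empMeas {m N : ℕ} (xs : Fin N → Vec m) (g : Vec m → ℝ) :
    Integrable g (empMeas xs) := by
  rcases eq_or_ne N 0 with rfl | hN
  · simp [empMeas]
  refine Integrable.smul_measure ?_ (by simp [hN])
  exact integrable_finsetSum_measure.2 fun i _ => integrable_dirac enorm_lt_top

lemma LipschitzWith.integrable_of_integrable_norm {E : Type*} [NormedAddCommGroup E]
    [MeasurableSpace E] [OpensMeasurableSpace E] {μ : Measure E} [IsFiniteMeasure μ]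
    {K : NNReal} {f : E → ℝ} (hf : LipschitzWith K f) (hμ : Integrable (fun ξ => ‖ξ‖) μ) :
    Integrable f μ := by
  refine ((integrable_const ‖f 0‖).add (hμ.const_mul K)).mono'
    hf.continuous.aestronglyMeasurable (.of_forall fun ξ => ?_)
  have := hf.dist_le_mul ξ 0
  rw [dist_eq_norm, dist_eq_norm, sub_zero] at this
  calc ‖f ξ‖ ≤ ‖f 0‖ + ‖f ξ - f 0‖ := norm_le_norm_add_norm_sub' _ _
    _ ≤ ‖f 0‖ + K * ‖ξ‖ := by gcongr

namespace IsCoupling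

variable {m : ℕ} {γ : Measure (Vec m × Vec m)} {P Q : Measure (Vec m)}

lemma prod [IsProbabilityMeasure P] [IsProbabilityMeasure Q] : IsCoupling (P.prod Q) P Q :=
  ⟨inferInstance, by simp, by simp⟩

lemma integrable_fst (hγ : IsCoupling γ P Q) {g : Vec m → ℝ} (hg : Integrable g P) :
    Integrable (fun p => g p.1) γ :=
  Integrable.comp_measurable (hγ.2.1 ▸ hg) measurable_fst

lemma integrable_snd (hγ : IsCoupling γ P Q) {g : Vec m → ℝ} (hg : Integrable g Q) :
    Integrable (fun p => g p.2) γ :=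
  Integrable.comp_measurable (hγ.2.2 ▸ hg) measurable_snd

lemma integral_fst (hγ : IsCoupling γ P Q) {g : Vec m → ℝ} (hg : AEStronglyMeasurable g P) :
    ∫ p, g p.1 ∂γ = ∫ ξ, g ξ ∂P := by
  obtain ⟨-, rfl, -⟩ := hγ
  exact (integral_map measurable_fst.aemeasurable hg).symm

lemma integral_snd (hγ : IsCoupling γ P Q) {g : Vec m → ℝ} (hg : AEStronglyMeasurable g Q) :
    ∫ p, g p.2 ∂γ = ∫ ξ, g ξ ∂Q := by
  obtain ⟨-, -, rfl⟩ := hγ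
  exact (integral_map measurable_snd.aemeasurable hg).symm

lemma abs_integral_sub_le (hγ : IsCoupling γ P Q) {K : NNReal} {f : Vec m → ℝ}
    (hf : LipschitzWith K f) (hP : Integrable (fun ξ => ‖ξ‖) P)
    (hQ : Integrable (fun ξ => ‖ξ‖) Q) :
    |∫ ξ, f ξ ∂P - ∫ ξ, f ξ ∂Q| ≤ K * ∫ p, ‖p.1 - p.2‖ ∂γ := by
  have := hγ.1
  have : IsFiniteMeasure P := by rw [← hγ.2.1]; infer_instance
  have : IsFiniteMeasure Q := by rw [← hγ.2.2]; infer_instance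
  have hfP := hf.integrable_of_integrable_norm hP
  have hfQ := hf.integrable_of_integrable_norm hQ
  have hdist : Integrable (fun p : Vec m × Vec m => ‖p.1 - p.2‖) γ :=
    ((hγ.integrable_fst hP).add (hγ.integrable_snd hQ)).mono'
      (by fun_prop) (.of_forall fun p => by simpa using norm_sub_le p.1 p.2)
  rw [← hγ.integral_fst hfP.1, ← hγ.integral_snd hfQ.1,
    ← integral_sub (hγ.integrable_fst hfP) (hγ.integrable_snd hfQ), ← integral_const_mul]
  refine abs_integral_le_integral_abs.trans (integral_mono ?_ (hdist.const_mul K) fun p => ?_)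
  · exact ((hγ.integrable_fst hfP).sub (hγ.integrable_snd hfQ)).abs
  · simpa [Real.dist_eq, dist_eq_norm] using hf.dist_le_mul p.1 p.2

end IsCoupling

lemma wDist_nonneg {m : ℕ} (P Q : Measure (Vec m)) : 0 ≤ wDist P Q :=
  Real.sInf_nonneg fun _ ⟨_, _, hc⟩ => hc ▸ integral_nonneg fun _ => norm_nonneg _

lemma abs_integral_sub_le_mul_wDist {m : ℕ} {K : NNReal} {f : Vec m → ℝ} (hf : LipschitzWith K f)
    {P Q : Measure (Vec m)} [IsProbabilityMeasure P] [IsProbabilityMeasure Q]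
    (hP : Integrable (fun ξ => ‖ξ‖) P) (hQ : Integrable (fun ξ => ‖ξ‖) Q) :
    |∫ ξ, f ξ ∂P - ∫ ξ, f ξ ∂Q| ≤ K * wDist P Q := by
  rw [wDist, ← smul_eq_mul, ← Real.sInf_smul_of_nonneg K.coe_nonneg]
  refine le_csInf (Set.Nonempty.smul_set ⟨_, _, IsCoupling.prod, rfl⟩) ?_
  rintro _ ⟨_, ⟨γ, hγ, rfl⟩, rfl⟩
  exact hγ.abs_integral_sub_le hf hP hQ

lemma ae_tendsto_zero_of_summable_tail {Ω : Type*} [MeasurableSpace Ω] {μ : Measure Ω}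
    {Y : ℕ → Ω → ℝ} (hY : ∀ N ω, 0 ≤ Y N ω) {r β : ℕ → ℝ}
    (htail : ∀ N, μ {ω | r N < Y N ω} ≤ ENNReal.ofReal (β N)) (hβ : Summable β)
    (hr : Tendsto r atTop (𝓝 0)) :
    ∀ᵐ ω ∂μ, Tendsto (fun N => Y N ω) atTop (𝓝 0) := by
  have hfinite : ∑' N, μ {ω | r N < Y N ω} ≠ ⊤ := by
    refine ne_top_of_le_ne_top ?_ (ENNReal.tsum_le_tsum fun N =>
      (htail N).trans (ENNReal.ofReal_le_ofReal (le_abs_self (β N))))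
    rw [← ENNReal.ofReal_tsum_of_nonneg (fun N => abs_nonneg _) hβ.abs]
    exact ENNReal.ofReal_ne_top
  filter_upwards [ae_eventually_notMem hfinite] with ω hω
  exact tendsto_of_tendsto_of_tendsto_of_le_of_le' tendsto_const_nhds hr
    (.of_forall fun N => hY N ω) (hω.mono fun N => not_lt.1)

theorem asymptotic_consistency_general {m : ℕ}
    {X : Type*}
    {Ω : Type*} [MeasurableSpace Ω] (μ : Measure Ω)
    (h : X → Vec m → ℝ) (L : ℝ) (hL : 0 ≤ L)
    (hLip : ∀ x ξ η, |h x ξ - h x η| ≤ L * ‖ξ - η‖)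
    (Pstar : Measure (Vec m)) [IsProbabilityMeasure Pstar]
    (hPstarmom : Integrable (fun ξ => ‖ξ‖) Pstar)
    -- i.i.d. samples from Pstar
    (ξs : ℕ → Ω → Vec m)
    -- empirical measures
    (Phat : (N : ℕ) → Ω → Measure (Vec m))
    (hPhat : ∀ N ω, Phat N ω = empMeas (fun i : Fin N => ξs i ω))
    -- reference values
    (ε : ℝ) (hε : 0 < ε)
    (τ : (N : ℕ) → Ω → ℝ)
    (hτ : ∀ N ω, τ N ω = (1 + ε) * ⨅ x, ∫ ξ, h x ξ ∂(Phat N ω))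
    (hfin : ∀ N, ∀ᵐ ω ∂μ, BddBelow (Set.range fun x => ∫ ξ, h x ξ ∂(Phat N ω)))
    -- almost surely RS-feasible random pairs with fragility bounded by L
    (xhat : (N : ℕ) → Ω → X) (khat : (N : ℕ) → Ω → ℝ)
    (hfeas : ∀ N, ∀ᵐ ω ∂μ, RSFeasible h (Phat N ω) (τ N ω) (xhat N ω) (khat N ω))
    (hkL : ∀ N, ∀ᵐ ω ∂μ, khat N ω ≤ L)
    -- concentration: summable confidence levels and vanishing radii
    (r β : ℕ → ℝ)
    (htail : ∀ N, μ {ω | r N < wDist Pstar (Phat N ω)} ≤ ENNReal.ofReal (β N))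
    (hsum : Summable β)
    (hr0 : Filter.Tendsto r Filter.atTop (nhds 0)) :
    ∀ᵐ ω ∂μ, ∀ δ : ℝ, 0 < δ → ∃ N₀ : ℕ, ∀ N ≥ N₀,
      τ N ω / (1 + ε) - δ ≤ (∫ ξ, h (xhat N ω) ξ ∂Pstar) ∧
      (∫ ξ, h (xhat N ω) ξ ∂Pstar) ≤ τ N ω + δ := by
  have hw := ae_tendsto_zero_of_summable_tail (fun N ω => wDist_nonneg Pstar (Phat N ω))
    htail hsum hr0
  filter_upwards [hw, ae_all_iff.2 hfeas, ae_all_iff.2 hkL, ae_all_iff.2 hfin]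
    with ω hwω hfeasω hkLω hfinω δ hδ
  have hsmall : ∀ᶠ N in atTop, L * wDist Pstar (Phat N ω) < δ := by
    simpa using (hwω.const_mul L).eventually_lt_const (by simpa using hδ)
  obtain ⟨N₀, hN₀⟩ := (hsmall.and (eventually_ne_atTop 0)).exists_forall_of_atTop
  refine ⟨N₀, fun N hN => ?_⟩
  obtain ⟨hsmallN, hN0⟩ := hN₀ N hN
  have : IsProbabilityMeasure (Phat N ω) := hPhat N ω ▸ isProbabilityMeasure_empMeas hN0 _
  have hmom : Integrable (fun ξ => ‖ξ‖) (Phat N ω) := hPhat N ω ▸ integrable_empMeas _ _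
  have hlip : LipschitzWith ⟨L, hL⟩ (h (xhat N ω)) :=
    .of_dist_le_mul fun ξ η => by rw [Real.dist_eq, dist_eq_norm]; exact hLip _ ξ η
  have hKR : |∫ ξ, h (xhat N ω) ξ ∂Pstar - ∫ ξ, h (xhat N ω) ξ ∂(Phat N ω)|
      ≤ L * wDist Pstar (Phat N ω) := abs_integral_sub_le_mul_wDist hlip hPstarmom hmom
  have hinf : τ N ω / (1 + ε) ≤ ∫ ξ, h (xhat N ω) ξ ∂(Phat N ω) := by
    rw [hτ, mul_div_cancel_left₀ _ (by linarith)]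
    exact ciInf_le (hfinω N) _
  have hup := (hfeasω N).2 Pstar inferInstance hPstarmom
  have hkw := mul_le_mul_of_nonneg_right (hkLω N) (wDist_nonneg Pstar (Phat N ω))
  constructor <;> linarith [abs_le.1 hKR]

/-- Asymptotic consistency, Eq. (7): if the tail bounds hold with
summable beta_N, r_N -> 0, and khat_N <= L a.s., then almost surely, for every
delta > 0, eventually tau/(1+eps) - delta <= E_{P*}[h(xhat_N,.)] <= tau + delta. -/
theorem asymptotic_consistency {m : ℕ}
    {X : Type*} [Nonempty X]
    {Ω : Type*} [MeasurableSpace Ω] (μ : Measure Ω) [IsProbabilityMeasure μ]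
    (h : X → Vec m → ℝ) (L : ℝ) (hL : 0 ≤ L)
    (hLip : ∀ x ξ η, |h x ξ - h x η| ≤ L * ‖ξ - η‖)
    (hInt : ∀ x (P : Measure (Vec m)), IsProbabilityMeasure P →
      Integrable (fun ξ => ‖ξ‖) P → Integrable (h x) P)
    (Pstar : Measure (Vec m)) [IsProbabilityMeasure Pstar]
    (hPstarmom : Integrable (fun ξ => ‖ξ‖) Pstar)
    -- i.i.d. samples from Pstar
    (ξs : ℕ → Ω → Vec m) (hmeas : ∀ i, Measurable (ξs i))
    (hindep : ProbabilityTheory.iIndepFun ξs μ)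
    (hdist : ∀ i, μ.map (ξs i) = Pstar)
    -- empirical measures
    (Phat : (N : ℕ) → Ω → Measure (Vec m))
    (hPhat : ∀ N ω, Phat N ω = empMeas (fun i : Fin N => ξs i ω))
    -- reference values
    (ε : ℝ) (hε : 0 < ε)
    (τ : (N : ℕ) → Ω → ℝ)
    (hτ : ∀ N ω, τ N ω = (1 + ε) * ⨅ x, ∫ ξ, h x ξ ∂(Phat N ω))
    (hfin : ∀ N, ∀ᵐ ω ∂μ, BddBelow (Set.range fun x => ∫ ξ, h x ξ ∂(Phat N ω)))
    -- almost surely RS-feasible random pairs with fragility bounded by L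
    (xhat : (N : ℕ) → Ω → X) (khat : (N : ℕ) → Ω → ℝ)
    (hfeas : ∀ N, ∀ᵐ ω ∂μ, RSFeasible h (Phat N ω) (τ N ω) (xhat N ω) (khat N ω))
    (hkL : ∀ N, ∀ᵐ ω ∂μ, khat N ω ≤ L)
    -- concentration: summable confidence levels and vanishing radii
    (r β : ℕ → ℝ) (hr : ∀ N, 0 < r N) (hβ0 : ∀ N, 0 < β N) (hβ1 : ∀ N, β N < 1)
    (htail : ∀ N, μ {ω | r N < wDist Pstar (Phat N ω)} ≤ ENNReal.ofReal (β N))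
    (hsum : Summable β)
    (hr0 : Filter.Tendsto r Filter.atTop (nhds 0)) :
    ∀ᵐ ω ∂μ, ∀ δ : ℝ, 0 < δ → ∃ N₀ : ℕ, ∀ N ≥ N₀,
      τ N ω / (1 + ε) - δ ≤ (∫ ξ, h (xhat N ω) ξ ∂Pstar) ∧
      (∫ ξ, h (xhat N ω) ξ ∂Pstar) ≤ τ N ω + δ :=
  asymptotic_consistency_general μ h L hL hLip Pstar hPstarmom ξs Phat hPhat ε hε τ hτ hfin xhat
    khat hfeas hkL r β htail hsum hr0
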